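/- arXiv:1710.08289 — 3 statements merged into one kernel-verified Lean document; each statement's English description precedes it below -/
import Mathlib

section
/- Let M ∈ ℝ^{ℕ×ℕ} be a bounded operator on ℓ² with a block structure given by 1 = n_1 < n_2 < ⋯, and suppose all finite leading block sections M[k] (the restriction of M to the first k blocks, i.e., indices {1,…,n_{k+1}−1}) are invertible with sup_k ‖(M[k])⁻¹‖ ≤ C_infsup < ∞. If M = LU is a block-LU factorization with L block-lower triangular, L(i,i) = I, and U block-upper triangular, then every diagonal block of U satisfies ‖U(k,k)‖ ≤ (1 + ‖M‖)² C_infsup. -/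
/-- `i` and `j` lie in the same block of the block structure given by the strictly increasing
sequence of block boundaries `N` (block `k` consists of the indices in `[N k, N (k+1))`). -/
def sameBlk (N : ℕ → ℕ) (i j : ℕ) : Prop := ∀ ℓ : ℕ, i < N ℓ ↔ j < N ℓ

/-- `L` is block-lower triangular with identity diagonal blocks. -/
def BlockLowerUnit (N : ℕ → ℕ) (L : ℕ → ℕ → ℝ) : Prop :=
  (∀ i j : ℕ, (∃ ℓ, i < N ℓ ∧ N ℓ ≤ j) → L i j = 0) ∧
    (∀ i j : ℕ, sameBlk N i j → L i j = if i = j then 1 else 0)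

/-- `U` is block-upper triangular. -/
def BlockUpper (N : ℕ → ℕ) (U : ℕ → ℕ → ℝ) : Prop :=
  ∀ i j : ℕ, (∃ ℓ, j < N ℓ ∧ N ℓ ≤ i) → U i j = 0

/-- The leading principal section of an infinite matrix on the first `n` indices. -/
def matSec (M : ℕ → ℕ → ℝ) (n : ℕ) : Matrix (Fin n) (Fin n) ℝ :=
  fun a b => M (a : ℕ) (b : ℕ)

/-!
Fix a block `k`. Let `S` select the coordinates of the first `k` blocks, `T` those of block `k`,
and let `A = Sᴴ M[k]⁻¹ S` be the zero-padded inverse of `M[k]`. Since sections at block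
boundaries factor as `M[j] = L[j] U[j]`, the Schur-complement identity
`M[k+1] - M[k+1] A M[k+1] = L[k+1] (1 - SᴴS) U[k+1]` holds; compressing it by `T` gives
`U(k,k) = T (M[k+1] - M[k+1] A M[k+1]) Tᴴ`, because the diagonal blocks of `L` are identities.
Finally `M[k+1] - M[k+1] A M[k+1] = M[k+1] (1 - R)`, where `R = A M[k+1]` is an idempotent with
the same range as the orthogonal projection `SᴴS`, and for such `R` one has
`‖1 - R‖ ≤ max 1 ‖R‖`. As `1 ≤ ‖M‖ C_infsup`, this gives `‖U(k,k)‖ ≤ ‖M‖² C_infsup`.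
-/

open Matrix
open scoped InnerProductSpace Matrix.Norms.L2Operator

section ProjectionNorm

variable {𝕜 E : Type*} [RCLike 𝕜] [NormedAddCommGroup E] [InnerProductSpace 𝕜 E]

/-- Testing `R` on `‖q‖² • x + ‖x‖² • q`, which `R` maps to a multiple of `x`. -/
theorem sq_norm_add_sq_norm_le_of_map_eq {R : E →L[𝕜] E} {x q : E} (hRx : R x = x)
    (hRq : R q = x) (horth : ⟪x, q⟫_𝕜 = 0) {r : ℝ} (hr : 1 ≤ r) (hR : ‖R‖ ≤ r) :
    ‖x‖ ^ 2 + ‖q‖ ^ 2 ≤ r ^ 2 * ‖q‖ ^ 2 := by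
  set a := ‖q‖ ^ 2
  set b := ‖x‖ ^ 2
  have ha : 0 ≤ a := by positivity
  rcases (by positivity : 0 ≤ b).eq_or_lt with hb | hb
  · rw [← hb, zero_add]; exact le_mul_of_one_le_left ha (one_le_pow₀ hr)
  set v := (a : 𝕜) • x + (b : 𝕜) • q
  have hRv : R v = ((a + b : ℝ) : 𝕜) • x := by
    rw [map_add, map_smul, map_smul, hRx, hRq, RCLike.ofReal_add, add_smul]
  have hv : ‖v‖ ^ 2 = a * b * (a + b) := by
    rw [@norm_add_sq 𝕜, inner_smul_left, inner_smul_right, horth, mul_zero, mul_zero,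
      map_zero, mul_zero, add_zero, norm_smul, norm_smul, RCLike.norm_ofReal,
      RCLike.norm_ofReal, abs_of_nonneg ha, abs_of_nonneg hb.le]
    ring
  have hle : ‖R v‖ ^ 2 ≤ r ^ 2 * ‖v‖ ^ 2 := by
    rw [← mul_pow]
    gcongr
    exact R.le_of_opNorm_le hR v
  rw [hRv, norm_smul, RCLike.norm_ofReal, abs_of_nonneg (by positivity), mul_pow, hv] at hle
  have : 0 < b * (a + b) := by positivity
  nlinarith

theorem norm_one_sub_le_of_range_eq [CompleteSpace E] {P R : E →L[𝕜] E}
    (hP : IsStarProjection P) (hPR : P * R = R) (hRP : R * P = P) {r : ℝ} (hr : 1 ≤ r)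
    (hR : ‖R‖ ≤ r) : ‖1 - R‖ ≤ r := by
  refine ContinuousLinearMap.opNorm_le_bound _ (zero_le_one.trans hr) fun y => ?_
  have hRR : R * R = R := by nth_rw 2 [← hPR]; rw [← mul_assoc, hRP, hPR]
  set q := y - P y
  set x := R q with hx
  have hPq : P q = 0 := by
    rw [map_sub, ← mul_apply_eq_comp, hP.isIdempotentElem.eq, sub_self]
  have horth : ⟪x, q⟫_𝕜 = 0 :=
    calc ⟪x, q⟫_𝕜 = ⟪P x, q⟫_𝕜 := by rw [hx, ← mul_apply_eq_comp, hPR]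
      _ = ⟪x, P q⟫_𝕜 := hP.isSelfAdjoint.isSymmetric x q
      _ = 0 := by rw [hPq, inner_zero_right]
  have hq : ‖q‖ ≤ ‖y‖ :=
    calc ‖q‖ = ‖(1 - P) y‖ := rfl
      _ ≤ ‖1 - P‖ * ‖y‖ := (1 - P).le_opNorm y
      _ ≤ ‖y‖ := mul_le_of_le_one_left (norm_nonneg y) hP.one_sub.norm_le
  have hy : (1 - R) y = q - x := by
    have : R y = P y + x := by
      conv_lhs => rw [show y = P y + q by simp [q]]
      rw [map_add, ← mul_apply_eq_comp, hRP]
    rw [_root_.sub_apply, one_apply_eq_self, this]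
    simp only [q]
    abel
  have key := sq_norm_add_sq_norm_le_of_map_eq (by rw [hx, ← mul_apply_eq_comp, hRR]) hx.symm
    horth hr hR
  rw [hy, ← pow_le_pow_iff_left₀ (norm_nonneg _) (by positivity) two_ne_zero, @norm_sub_sq 𝕜,
    inner_eq_zero_symm.mp horth, map_zero, mul_zero, sub_zero, mul_pow]
  calc ‖q‖ ^ 2 + ‖x‖ ^ 2 ≤ r ^ 2 * ‖q‖ ^ 2 := by linarith
    _ ≤ r ^ 2 * ‖y‖ ^ 2 := by gcongr

end ProjectionNorm

section L2OpNorm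

variable {𝕜 : Type*} [RCLike 𝕜]

theorem Matrix.l2_opNorm_one_le {n : Type*} [Fintype n] [DecidableEq n] :
    ‖(1 : Matrix n n 𝕜)‖ ≤ 1 := by
  rw [cstar_norm_def, map_one]; exact ContinuousLinearMap.norm_id_le

theorem Matrix.l2_opNorm_conjTranspose_le_one {m n : Type*} [Fintype m] [Fintype n]
    [DecidableEq m] [DecidableEq n] {S : Matrix m n 𝕜} (hS : S * Sᴴ = 1) : ‖Sᴴ‖ ≤ 1 := by
  have h := l2_opNorm_conjTranspose_mul_self Sᴴ
  rw [conjTranspose_conjTranspose, hS] at h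
  nlinarith [norm_nonneg Sᴴ, l2_opNorm_one_le (n := m) (𝕜 := 𝕜)]

theorem Matrix.l2_opNorm_le_one {m n : Type*} [Fintype m] [Fintype n] [DecidableEq m]
    [DecidableEq n] {S : Matrix m n 𝕜} (hS : S * Sᴴ = 1) : ‖S‖ ≤ 1 :=
  l2_opNorm_conjTranspose S ▸ l2_opNorm_conjTranspose_le_one hS

theorem Matrix.l2_opNorm_mul_mul_le_of_le_one {l m n o : Type*} [Fintype l] [Fintype m]
    [Fintype n] [Fintype o] [DecidableEq m] [DecidableEq n] [DecidableEq o] {A : Matrix l m 𝕜}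
    {X : Matrix m n 𝕜} {C : Matrix n o 𝕜} (hA : ‖A‖ ≤ 1) (hC : ‖C‖ ≤ 1) : ‖A * X * C‖ ≤ ‖X‖ :=
  calc ‖A * X * C‖ ≤ ‖A‖ * ‖X‖ * ‖C‖ :=
        (l2_opNorm_mul _ _).trans (by gcongr; exact l2_opNorm_mul _ _)
    _ ≤ 1 * ‖X‖ * 1 := by gcongr
    _ = ‖X‖ := by ring

theorem Matrix.one_le_l2_opNorm_mul {n : Type*} [Fintype n] [DecidableEq n] [Nonempty n]
    {A B : Matrix n n 𝕜} (h : A * B = 1) : 1 ≤ ‖A‖ * ‖B‖ :=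
  calc (1 : ℝ) = ‖A * B‖ := by rw [h, norm_one]
    _ ≤ ‖A‖ * ‖B‖ := l2_opNorm_mul A B

theorem Matrix.l2_opNorm_one_sub_le_of_range_eq {n : Type*} [Fintype n] [DecidableEq n]
    {P R : Matrix n n 𝕜} (hP : IsStarProjection P) (hPR : P * R = R) (hRP : R * P = P)
    {r : ℝ} (hr : 1 ≤ r) (hR : ‖R‖ ≤ r) : ‖1 - R‖ ≤ r := by
  rw [cstar_norm_def, map_sub, map_one]
  exact norm_one_sub_le_of_range_eq (hP.map toEuclideanCLM) (by rw [← map_mul, hPR])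
    (by rw [← map_mul, hRP]) hr hR

/-- With `S` an isometric embedding of coordinates and `B` the inverse of the compression
`S M Sᴴ`, the operator `Sᴴ B S M` is an oblique projection onto the range of `Sᴴ`. -/
theorem Matrix.l2_opNorm_sub_mul_mul_le {m n : Type*} [Fintype m] [Fintype n] [DecidableEq m]
    [DecidableEq n] {M : Matrix m m 𝕜} {S : Matrix n m 𝕜} {B : Matrix n n 𝕜}
    (hS : S * Sᴴ = 1) (hB : B * (S * M * Sᴴ) = 1) {a c : ℝ} (hMa : ‖M‖ ≤ a) (hBc : ‖B‖ ≤ c)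
    (hac : 1 ≤ a * c) : ‖M - M * (Sᴴ * B * S) * M‖ ≤ a ^ 2 * c := by
  have hP : IsStarProjection (Sᴴ * S) :=
    ⟨by rw [IsIdempotentElem, Matrix.mul_assoc, ← Matrix.mul_assoc S, hS, Matrix.one_mul],
      isHermitian_conjTranspose_mul_self S⟩
  set R := Sᴴ * B * S * M
  have hPR : Sᴴ * S * R = R := by
    simp only [R, ← Matrix.mul_assoc]; rw [Matrix.mul_assoc Sᴴ S, hS, Matrix.mul_one]
  have hRP : R * (Sᴴ * S) = Sᴴ * S :=
    calc R * (Sᴴ * S) = Sᴴ * (B * (S * M * Sᴴ)) * S := by simp only [R, Matrix.mul_assoc]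
      _ = Sᴴ * S := by rw [hB, Matrix.mul_one]
  have hR : ‖R‖ ≤ a * c :=
    calc ‖R‖ ≤ ‖Sᴴ * B * S‖ * ‖M‖ := l2_opNorm_mul _ _
      _ ≤ c * a := by
          gcongr
          · exact (norm_nonneg B).trans hBc
          · exact (l2_opNorm_mul_mul_le_of_le_one (l2_opNorm_conjTranspose_le_one hS)
              (l2_opNorm_le_one hS)).trans hBc
      _ = a * c := mul_comm c a
  have hM0 : 0 ≤ a := (norm_nonneg M).trans hMa
  calc ‖M - M * (Sᴴ * B * S) * M‖ = ‖M * (1 - R)‖ := by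
        simp only [R, Matrix.mul_sub, Matrix.mul_one, Matrix.mul_assoc]
    _ ≤ ‖M‖ * ‖1 - R‖ := l2_opNorm_mul _ _
    _ ≤ a * (a * c) := by
        gcongr
        exact l2_opNorm_one_sub_le_of_range_eq hP hPR hRP hac hR
    _ = a ^ 2 * c := by ring

end L2OpNorm

theorem Matrix.one_submatrix_mul_conjTranspose {α l m : Type*} [Semiring α] [StarRing α]
    [Fintype m] [DecidableEq l] [DecidableEq m] {e : l → m} (he : Function.Injective e) :
    (1 : Matrix m m α).submatrix e id * ((1 : Matrix m m α).submatrix e id)ᴴ = 1 := by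
  rw [conjTranspose_submatrix, conjTranspose_one, ← submatrix_mul _ _ _ _ _ Function.bijective_id,
    Matrix.one_mul, submatrix_one _ he]

theorem Matrix.one_submatrix_mul_mul_conjTranspose {α l m n : Type*} [Semiring α] [StarRing α]
    [Fintype m] [DecidableEq m] {e : l → m} {f : n → m} (A : Matrix m m α) :
    (1 : Matrix m m α).submatrix e id * A * ((1 : Matrix m m α).submatrix f id)ᴴ =
      A.submatrix e f := by
  rw [conjTranspose_submatrix, conjTranspose_one]
  ext i j
  simp [mul_apply, one_apply]

theorem Matrix.sub_mul_mul_eq_of_blockLU {R m n : Type*} [CommRing R] [Fintype m] [Fintype n]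
    [DecidableEq m] [DecidableEq n] {M L U : Matrix m m R} {Ln Un B : Matrix n n R}
    {S : Matrix n m R} {S' : Matrix m n R} (hM : M = L * U) (hB : B * (Ln * Un) = 1)
    (hSL : S * L = Ln * S) (hUS : U * S' = S' * Un) :
    M - M * (S' * B * S) * M = L * (1 - S' * S) * U := by
  have hUn : Un * (B * Ln) = 1 := mul_eq_one_comm.mp (by rw [Matrix.mul_assoc, hB])
  have hUAL : U * (S' * B * S) * L = S' * S :=
    calc U * (S' * B * S) * L = (U * S') * B * (S * L) := by simp only [Matrix.mul_assoc]
      _ = S' * (Un * (B * Ln)) * S := by rw [hUS, hSL]; simp only [Matrix.mul_assoc]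
      _ = S' * S := by rw [hUn, Matrix.mul_one]
  calc M - M * (S' * B * S) * M = L * U - L * (U * (S' * B * S) * L) * U := by
        rw [hM]; simp only [Matrix.mul_assoc]
    _ = L * (1 - S' * S) * U := by rw [hUAL, Matrix.mul_sub, Matrix.sub_mul, Matrix.mul_one]

section Sections

theorem sameBlk_of_mem_Ico {N : ℕ → ℕ} (hN : StrictMono N) {k i j : ℕ}
    (hi : i ∈ Set.Ico (N k) (N (k + 1))) (hj : j ∈ Set.Ico (N k) (N (k + 1))) :
    sameBlk N i j := by
  intro ℓ
  rcases le_or_gt ℓ k with hℓ | hℓ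
  · have := hN.monotone hℓ
    grind
  · have := hN.monotone (Nat.succ_le_of_lt hℓ)
    grind

theorem matSec_eq_mul_of_tsum {M L U : ℕ → ℕ → ℝ} (hLU : ∀ i j, M i j = ∑' l, L i l * U l j)
    {n : ℕ} (hL : ∀ i l, i < n → n ≤ l → L i l = 0) :
    matSec M n = matSec L n * matSec U n := by
  ext a b
  rw [mul_apply]
  show M a b = ∑ l : Fin n, L a l * U l b
  rw [hLU, tsum_eq_sum (s := Finset.range n) fun l hl => by
      rw [hL a l a.isLt (by simpa using hl), zero_mul],
    Finset.sum_range fun l => L a l * U l b]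

def prefixRows {n m : ℕ} (h : n ≤ m) : Matrix (Fin n) (Fin m) ℝ :=
  (1 : Matrix (Fin m) (Fin m) ℝ).submatrix (Fin.castLE h) id

def suffixRows (n m : ℕ) : Matrix (Fin (m - n)) (Fin m) ℝ :=
  (1 : Matrix (Fin m) (Fin m) ℝ).submatrix (fun a => ⟨n + a, by omega⟩) id

variable {n m : ℕ} (h : n ≤ m)

theorem prefixRows_mul_conjTranspose : prefixRows h * (prefixRows h)ᴴ = 1 :=
  one_submatrix_mul_conjTranspose (Fin.castLE_injective h)

theorem suffixRows_mul_conjTranspose : suffixRows n m * (suffixRows n m)ᴴ = 1 :=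
  one_submatrix_mul_conjTranspose fun a b hab => by simpa [Fin.ext_iff] using hab

theorem conjTranspose_prefixRows_mul_add :
    (prefixRows h)ᴴ * prefixRows h + (suffixRows n m)ᴴ * suffixRows n m = 1 := by
  ext i j
  set g : ℕ → ℝ := fun x => if x = j then if (i : ℕ) = x then 1 else 0 else 0
  have hsum := Finset.sum_range_add g n (m - n)
  rw [Nat.add_sub_cancel' h, Finset.sum_ite_eq', if_pos (Finset.mem_range.2 j.isLt),
    ← Fin.sum_univ_eq_sum_range, ← Fin.sum_univ_eq_sum_range (fun x => g (n + x))] at hsum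
  simpa [prefixRows, suffixRows, mul_apply, one_apply, g, Fin.ext_iff] using hsum.symm

theorem prefixRows_mul_matSec_mul (X : ℕ → ℕ → ℝ) :
    prefixRows h * matSec X m * (prefixRows h)ᴴ = matSec X n :=
  one_submatrix_mul_mul_conjTranspose _

theorem suffixRows_mul_matSec_mul (X : ℕ → ℕ → ℝ) :
    suffixRows n m * matSec X m * (suffixRows n m)ᴴ =
      (fun a b => X (n + a) (n + b) : Matrix (Fin (m - n)) (Fin (m - n)) ℝ) :=
  one_submatrix_mul_mul_conjTranspose _

theorem prefixRows_mul_matSec {X : ℕ → ℕ → ℝ} (hX : ∀ i j, i < n → n ≤ j → X i j = 0) :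
    prefixRows h * matSec X m = matSec X n * prefixRows h := by
  ext a j
  simp only [prefixRows, mul_apply, submatrix_apply, one_apply, id_eq, matSec, ite_mul, one_mul,
    zero_mul, Finset.sum_ite_eq, Finset.mem_univ, ↓reduceIte, mul_ite, mul_one, mul_zero]
  simp only [Fin.ext_iff, Fin.val_castLE]
  rw [Fin.sum_univ_eq_sum_range (fun l => if l = (j : ℕ) then X a l else 0), Finset.sum_ite_eq']
  split_ifs with hj
  · rfl
  · exact hX _ _ a.isLt (by simpa using hj)

theorem matSec_mul_conjTranspose_prefixRows {X : ℕ → ℕ → ℝ}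
    (hX : ∀ i j, j < n → n ≤ i → X i j = 0) :
    matSec X m * (prefixRows h)ᴴ = (prefixRows h)ᴴ * matSec X n := by
  ext i b
  simp only [prefixRows, conjTranspose_eq_transpose_of_trivial, transpose_submatrix,
    transpose_one, mul_apply, matSec, submatrix_apply, one_apply, id_eq, mul_ite, mul_one,
    mul_zero, Finset.sum_ite_eq', Finset.mem_univ, ↓reduceIte, ite_mul, one_mul, zero_mul]
  simp only [Fin.ext_iff, Fin.val_castLE]
  rw [Fin.sum_univ_eq_sum_range (fun l => if (i : ℕ) = l then X l b else 0), Finset.sum_ite_eq]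
  split_ifs with hi
  · rfl
  · exact hX _ _ b.isLt (by simpa using hi)

def diagBlock (N : ℕ → ℕ) (X : ℕ → ℕ → ℝ) (k : ℕ) :
    Matrix (Fin (N (k + 1) - N k)) (Fin (N (k + 1) - N k)) ℝ :=
  fun a b => X (N k + a) (N k + b)

theorem BlockLowerUnit.diagBlock_eq_one {N : ℕ → ℕ} (hN : StrictMono N) {L : ℕ → ℕ → ℝ}
    (hL : BlockLowerUnit N L) (k : ℕ) : diagBlock N L k = 1 := by
  ext a b
  have hblk (c : Fin (N (k + 1) - N k)) : N k + c ∈ Set.Ico (N k) (N (k + 1)) := by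
    constructor <;> omega
  rw [diagBlock, hL.2 _ _ (sameBlk_of_mem_Ico hN (hblk a) (hblk b)), one_apply]
  simp [Fin.ext_iff]

theorem diagBlock_eq_of_blockLU {N : ℕ → ℕ} (hN : StrictMono N) {M L U : ℕ → ℕ → ℝ}
    (hL : BlockLowerUnit N L) (hU : BlockUpper N U) (hLU : ∀ i j, M i j = ∑' l, L i l * U l j)
    {k : ℕ} (hk : N k ≤ N (k + 1)) {B : Matrix (Fin (N k)) (Fin (N k)) ℝ}
    (hB : B * matSec M (N k) = 1) :
    diagBlock N U k = suffixRows (N k) (N (k + 1)) *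
      (matSec M (N (k + 1)) - matSec M (N (k + 1)) * ((prefixRows hk)ᴴ * B * prefixRows hk) *
        matSec M (N (k + 1))) * (suffixRows (N k) (N (k + 1)))ᴴ := by
  have hLsec (j : ℕ) := matSec_eq_mul_of_tsum hLU fun i l hi hl => hL.1 i l ⟨j, hi, hl⟩
  set S := prefixRows hk
  set T := suffixRows (N k) (N (k + 1))
  have hschur := sub_mul_mul_eq_of_blockLU (hLsec (k + 1)) (hLsec k ▸ hB)
    (prefixRows_mul_matSec hk fun i l hi hl => hL.1 i l ⟨k, hi, hl⟩)
    (matSec_mul_conjTranspose_prefixRows hk fun i j hj hi => hU i j ⟨k, hj, hi⟩)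
  have hLkk : T * matSec L (N (k + 1)) * Tᴴ = 1 :=
    (suffixRows_mul_matSec_mul L).trans (hL.diagBlock_eq_one hN k)
  have hST : Tᴴ * T = 1 - Sᴴ * S := eq_sub_of_add_eq' (conjTranspose_prefixRows_mul_add hk)
  calc diagBlock N U k = T * matSec U (N (k + 1)) * Tᴴ := (suffixRows_mul_matSec_mul U).symm
    _ = (T * matSec L (N (k + 1)) * Tᴴ) * (T * matSec U (N (k + 1)) * Tᴴ) := by
        rw [hLkk, Matrix.one_mul]
    _ = _ := by rw [hschur, ← hST]; simp only [Matrix.mul_assoc]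

end Sections

theorem statement5_general
    (N : ℕ → ℕ) (hNmono : StrictMono N)
    (M L U : ℕ → ℕ → ℝ)
    (CM : ℝ) (hCM : ∀ k : ℕ, ‖Matrix.toEuclideanCLM (𝕜 := ℝ) (matSec M (N k))‖ ≤ CM)
    (Cinfsup : ℝ)
    (Minv : ∀ k : ℕ, Matrix (Fin (N k)) (Fin (N k)) ℝ)
    (hMinv : ∀ k : ℕ, matSec M (N k) * Minv k = 1 ∧ Minv k * matSec M (N k) = 1)
    (hMinvBound : ∀ k : ℕ, ‖Matrix.toEuclideanCLM (𝕜 := ℝ) (Minv k)‖ ≤ Cinfsup)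
    (hL : BlockLowerUnit N L) (hU : BlockUpper N U)
    (hLU : ∀ i j : ℕ, M i j = ∑' k : ℕ, L i k * U k j) :
    ∀ k : ℕ,
      ‖Matrix.toEuclideanCLM (𝕜 := ℝ)
          ((fun a b => U (N k + (a : ℕ)) (N k + (b : ℕ)) :
            Matrix (Fin (N (k + 1) - N k)) (Fin (N (k + 1) - N k)) ℝ))‖
        ≤ (1 + CM) ^ 2 * Cinfsup := by
  have hCM0 : 0 ≤ CM := (norm_nonneg _).trans (hCM 0)
  have hCi0 : 0 ≤ Cinfsup := (norm_nonneg _).trans (hMinvBound 0)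
  have hCMCi : 1 ≤ CM * Cinfsup := by
    have : Nonempty (Fin (N 1)) := ⟨⟨0, (Nat.zero_le _).trans_lt (hNmono zero_lt_one)⟩⟩
    exact (one_le_l2_opNorm_mul (hMinv 1).1).trans
      (mul_le_mul (hCM 1) (hMinvBound 1) (norm_nonneg _) hCM0)
  intro k
  have hk : N k ≤ N (k + 1) := hNmono.monotone k.le_succ
  change ‖diagBlock N U k‖ ≤ _
  rw [diagBlock_eq_of_blockLU hNmono hL hU hLU hk (hMinv k).2]
  calc _ ≤ ‖matSec M (N (k + 1)) - matSec M (N (k + 1)) *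
          ((prefixRows hk)ᴴ * Minv k * prefixRows hk) * matSec M (N (k + 1))‖ :=
        l2_opNorm_mul_mul_le_of_le_one (l2_opNorm_le_one suffixRows_mul_conjTranspose)
          (l2_opNorm_conjTranspose_le_one suffixRows_mul_conjTranspose)
    _ ≤ CM ^ 2 * Cinfsup :=
        l2_opNorm_sub_mul_mul_le (prefixRows_mul_conjTranspose hk)
          (by rw [prefixRows_mul_matSec_mul]; exact (hMinv k).2) (hCM (k + 1)) (hMinvBound k) hCMCi
    _ ≤ (1 + CM) ^ 2 * Cinfsup := by gcongr; linarith

/-- Bound on the diagonal blocks of the block-`LU` factor `U`: if `M` is bounded on `ℓ²`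
(with norm bound `CM` on all finite sections), all leading block sections `M[k]` are
invertible with `‖M[k]⁻¹‖ ≤ C_infsup`, and `M = LU` is a block-LU factorization, then
`‖U(k,k)‖ ≤ (1 + CM)² C_infsup` for every block `k`. -/
theorem statement5
    (N : ℕ → ℕ) (hN0 : N 0 = 0) (hNmono : StrictMono N)
    (M L U : ℕ → ℕ → ℝ)
    (CM : ℝ) (hCM : ∀ k : ℕ, ‖Matrix.toEuclideanCLM (𝕜 := ℝ) (matSec M (N k))‖ ≤ CM)
    (Cinfsup : ℝ)
    (Minv : ∀ k : ℕ, Matrix (Fin (N k)) (Fin (N k)) ℝ)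
    (hMinv : ∀ k : ℕ, matSec M (N k) * Minv k = 1 ∧ Minv k * matSec M (N k) = 1)
    (hMinvBound : ∀ k : ℕ, ‖Matrix.toEuclideanCLM (𝕜 := ℝ) (Minv k)‖ ≤ Cinfsup)
    (hL : BlockLowerUnit N L) (hU : BlockUpper N U)
    (hLU : ∀ i j : ℕ, M i j = ∑' k : ℕ, L i k * U k j) :
    ∀ k : ℕ,
      ‖Matrix.toEuclideanCLM (𝕜 := ℝ)
          ((fun a b => U (N k + (a : ℕ)) (N k + (b : ℕ)) :
            Matrix (Fin (N (k + 1) - N k)) (Fin (N (k + 1) - N k)) ℝ))‖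
        ≤ (1 + CM) ^ 2 * Cinfsup :=
  statement5_general N hNmono M L U CM hCM Cinfsup Minv hMinv hMinvBound hL hU hLU
end

section
/- Let M ∈ ℝ^{ℕ×ℕ} with block structure n_1 < n_2 < ⋯ such that each leading block section M[k] is invertible, and let M = LU be the (unique) block-LU factorization with L(i,i) = I. Then for all i ≤ k, the (i,k)-th block of M[k]⁻¹ equals the (i,k)-th block of U⁻¹, i.e., M[k]⁻¹(i,k) = U⁻¹(i,k). -/
lemma tsum_eq_sum_fin_of_eq_zero {α : Type*} [AddCommMonoid α] [TopologicalSpace α]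
    (f : ℕ → α) (n : ℕ) (hf : ∀ c, n ≤ c → f c = 0) :
    ∑' c, f c = ∑ c : Fin n, f c := by
  rw [tsum_eq_sum (s := Finset.range n) (fun c hc => hf c (by simpa using hc)),
    Fin.sum_univ_eq_sum_range]

lemma matSec_eq_mul (A B C : ℕ → ℕ → ℝ) (n : ℕ)
    (hC : ∀ i j, C i j = ∑' c, A i c * B c j)
    (hAB : ∀ i j c, i < n → j < n → n ≤ c → A i c * B c j = 0) :
    matSec C n = matSec A n * matSec B n := by
  ext i j
  rw [Matrix.mul_apply]
  exact (hC i j).trans <| tsum_eq_sum_fin_of_eq_zero _ n (hAB i j · i.isLt j.isLt)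

lemma matSec_ite_eq_one (n : ℕ) :
    matSec (fun i j => if i = j then 1 else 0) n = 1 := by
  ext i j
  simp [matSec, Matrix.one_apply, Fin.ext_iff]

lemma BlockLowerUnit.apply_of_mem_block {N : ℕ → ℕ} (hN : Monotone N) {L : ℕ → ℕ → ℝ}
    (hL : BlockLowerUnit N L) {k c b : ℕ} (hkb : N k ≤ b) (hb : b < N (k + 1))
    (hc : c < N (k + 1)) :
    L c b = if c = b then 1 else 0 := by
  by_cases hck : c < N k
  · rw [hL.1 c b ⟨k, hck, hkb⟩, if_neg (by omega)]
  · refine hL.2 c b fun ℓ => ?_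
    rcases le_or_gt ℓ k with hℓ | hℓ
    · have := hN hℓ
      omega
    · have : N (k + 1) ≤ N ℓ := hN hℓ
      omega

lemma mul_matSec_eq_of_mul_matSec_eq_one {M L U Uinv : ℕ → ℕ → ℝ} {n : ℕ}
    (hL : ∀ i c, i < n → n ≤ c → L i c = 0) (hUinv : ∀ j c, j < n → n ≤ c → Uinv c j = 0)
    (hLU : ∀ i j, M i j = ∑' c, L i c * U c j)
    (hUUinv : ∀ i j, (∑' c, U i c * Uinv c j) = if i = j then 1 else 0)
    {Minv : Matrix (Fin n) (Fin n) ℝ} (hMinv : Minv * matSec M n = 1) :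
    Minv * matSec L n = matSec Uinv n := by
  have hM : matSec M n = matSec L n * matSec U n :=
    matSec_eq_mul L U M n hLU fun i _ c hi _ hc => by rw [hL i c hi hc, zero_mul]
  have hU : matSec U n * matSec Uinv n = 1 := by
    rw [← matSec_eq_mul U Uinv _ n (fun i j => (hUUinv i j).symm) fun _ j c _ hj hc => by
      rw [hUinv j c hj hc, mul_zero], matSec_ite_eq_one]
  calc Minv * matSec L n = Minv * matSec L n * (matSec U n * matSec Uinv n) := by
        rw [hU, Matrix.mul_one]
    _ = Minv * matSec M n * matSec Uinv n := by simp only [hM, Matrix.mul_assoc]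
    _ = matSec Uinv n := by rw [hMinv, Matrix.one_mul]

theorem statement7_general
    (N : ℕ → ℕ) (hNmono : StrictMono N)
    (M L U Uinv : ℕ → ℕ → ℝ)
    (hL : BlockLowerUnit N L) (hUinv : BlockUpper N Uinv)
    (hLU : ∀ i j : ℕ, M i j = ∑' k : ℕ, L i k * U k j)
    (hUUinv : ∀ i j : ℕ, (∑' k : ℕ, U i k * Uinv k j) = if i = j then 1 else 0)
    (Minv : ∀ n : ℕ, Matrix (Fin (N n)) (Fin (N n)) ℝ)
    (hMinv : ∀ n : ℕ, matSec M (N n) * Minv n = 1 ∧ Minv n * matSec M (N n) = 1) :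
    ∀ (k : ℕ) (a b : Fin (N (k + 1))), N k ≤ (b : ℕ) →
      Minv (k + 1) a b = Uinv (a : ℕ) (b : ℕ) := by
  intro k a b hb
  have hMinvL : Minv (k + 1) * matSec L (N (k + 1)) = matSec Uinv (N (k + 1)) :=
    mul_matSec_eq_of_mul_matSec_eq_one (fun i c hi hc => hL.1 i c ⟨k + 1, hi, hc⟩)
      (fun j c hj hc => hUinv c j ⟨k + 1, hj, hc⟩) hLU hUUinv (hMinv (k + 1)).2
  have hLcol (c : Fin (N (k + 1))) : matSec L (N (k + 1)) c b = if c = b then 1 else 0 := by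
    simpa [matSec, Fin.ext_iff] using
      hL.apply_of_mem_block hNmono.monotone hb b.isLt c.isLt
  have hab := congrFun (congrFun hMinvL a) b
  simp only [Matrix.mul_apply, hLcol, mul_ite, mul_one, mul_zero, Finset.sum_ite_eq',
    Finset.mem_univ, if_true] at hab
  exact hab

/-- The entries of `M[k]⁻¹` in the last block column agree with those of `U⁻¹`:
if `M = LU` is the normalized block-LU factorization, then `M[k]⁻¹(i,k) = U⁻¹(i,k)`
for all block indices `i ≤ k`. -/
theorem statement7
    (N : ℕ → ℕ) (hN0 : N 0 = 0) (hNmono : StrictMono N)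
    (M L U Uinv : ℕ → ℕ → ℝ)
    (hL : BlockLowerUnit N L) (hU : BlockUpper N U) (hUinv : BlockUpper N Uinv)
    (hLU : ∀ i j : ℕ, M i j = ∑' k : ℕ, L i k * U k j)
    (hUUinv : ∀ i j : ℕ, (∑' k : ℕ, U i k * Uinv k j) = if i = j then 1 else 0)
    (hUinvU : ∀ i j : ℕ, (∑' k : ℕ, Uinv i k * U k j) = if i = j then 1 else 0)
    (Minv : ∀ n : ℕ, Matrix (Fin (N n)) (Fin (N n)) ℝ)
    (hMinv : ∀ n : ℕ, matSec M (N n) * Minv n = 1 ∧ Minv n * matSec M (N n) = 1) :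
    ∀ (k : ℕ) (a b : Fin (N (k + 1))), N k ≤ (b : ℕ) →
      Minv (k + 1) a b = Uinv (a : ℕ) (b : ℕ) :=
  statement7_general N hNmono M L U Uinv hL hUinv hLU hUUinv Minv hMinv
end

section
/- Let (w_n)_{n∈ℕ} be a Riesz basis of a Hilbert space 𝒳 with C⁻¹‖x‖² ≤ ∑ λ_n² ≤ C‖x‖² for x = ∑ λ_n w_n. Let a : 𝒳 × 𝒳 → ℝ be a bounded bilinear form and M_{ij} := a(w_j, w_i). Suppose 𝒳_ℓ := span{w_1,…,w_{N_ℓ}} (with N_ℓ strictly increasing) and M has a block-LU factorization M = LU with respect to the block structure induced by (N_ℓ), with U and U⁻¹ bounded on ℓ². Let u ∈ 𝒳 solve a(u,v) = f(v) for all v ∈ 𝒳 and u_ℓ ∈ 𝒳_ℓ solve a(u_ℓ,v) = f(v) for all v ∈ 𝒳_ℓ (assumed to exist uniquely). Then there is a constant C_qo such that for all ℓ: ∑_{k=ℓ}^∞ ‖u_{k+1} − u_k‖² ≤ C_qo ‖u − u_ℓ‖². -/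
/-- `T` is the bounded operator on `ℓ²` represented by the matrix `A`. -/
def lpRepr (A : ℕ → ℕ → ℝ) (T : lp (fun _ : ℕ => ℝ) 2 →L[ℝ] lp (fun _ : ℕ => ℝ) 2) : Prop :=
  ∀ (x : lp (fun _ : ℕ => ℝ) 2) (i : ℕ), T x i = ∑' j : ℕ, A i j * x j

open Finset

def secMul (A : ℕ → ℕ → ℝ) (n : ℕ) (x : ℕ → ℝ) (i : ℕ) : ℝ := ∑ j ∈ range n, A i j * x j

lemma lp.sum_sq_le_norm_sq (x : lp (fun _ : ℕ => ℝ) 2) (s : Finset ℕ) :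
    ∑ i ∈ s, x i ^ 2 ≤ ‖x‖ ^ 2 := by
  simpa using lp.sum_rpow_le_norm_rpow (p := 2) (by norm_num) x s

lemma lp.norm_sq_sum_single (x : ℕ → ℝ) (s : Finset ℕ) :
    ‖∑ j ∈ s, lp.single 2 j (x j)‖ ^ 2 = ∑ j ∈ s, x j ^ 2 := by
  simpa using lp.norm_sum_single (p := 2) (by norm_num) x s

lemma lpRepr.sum_sq_secMul_le {A : ℕ → ℕ → ℝ}
    {T : lp (fun _ : ℕ => ℝ) 2 →L[ℝ] lp (fun _ : ℕ => ℝ) 2} (hT : lpRepr A T)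
    (x : ℕ → ℝ) (n n' : ℕ) :
    ∑ i ∈ range n', secMul A n x i ^ 2 ≤ ‖T‖ ^ 2 * ∑ j ∈ range n, x j ^ 2 := by
  set X := ∑ j ∈ range n, lp.single 2 j (x j)
  have hTX : ∀ i, T X i = secMul A n x i := by
    intro i
    have hX : ∀ j, X j = if j ∈ range n then x j else 0 := fun j => by
      simp only [X, lp.coeFn_sum, Finset.sum_apply, lp.single_apply, Pi.single_apply,
        Finset.sum_ite_eq]
    rw [hT, secMul, tsum_eq_sum (s := range n) fun j hj => by simp [hX, hj]]
    exact sum_congr rfl fun j hj => by simp [hX, hj]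
  calc ∑ i ∈ range n', secMul A n x i ^ 2 = ∑ i ∈ range n', T X i ^ 2 := by simp only [hTX]
    _ ≤ ‖T X‖ ^ 2 := lp.sum_sq_le_norm_sq _ _
    _ ≤ (‖T‖ * ‖X‖) ^ 2 := by gcongr; exact T.le_opNorm X
    _ = ‖T‖ ^ 2 * ∑ j ∈ range n, x j ^ 2 := by rw [mul_pow, lp.norm_sq_sum_single]

lemma secMul_sub (A : ℕ → ℕ → ℝ) (n : ℕ) (x y : ℕ → ℝ) (i : ℕ) :
    secMul A n (x - y) i = secMul A n x i - secMul A n y i := by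
  simp only [secMul, Pi.sub_apply, mul_sub, sum_sub_distrib]

lemma secMul_eq_of_le (A : ℕ → ℕ → ℝ) {n n' : ℕ} (hn : n ≤ n') {x : ℕ → ℝ}
    (hx : ∀ j, n ≤ j → x j = 0) (i : ℕ) : secMul A n' x i = secMul A n x i :=
  (sum_subset (range_subset_range.2 hn) fun j _ hj => by
    rw [hx j (by simpa using hj), mul_zero]).symm

lemma sum_sq_le_of_secMul_eq {M : ℕ → ℕ → ℝ} {n : ℕ} {B : Matrix (Fin n) (Fin n) ℝ}
    (hB : B * matSec M n = 1) {x r : ℕ → ℝ} (h : ∀ i < n, secMul M n x i = r i) :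
    ∑ j ∈ range n, x j ^ 2 ≤ ‖Matrix.toEuclideanCLM (𝕜 := ℝ) B‖ ^ 2 * ∑ i ∈ range n, r i ^ 2 := by
  set xv : Fin n → ℝ := fun j => x j
  set rv : Fin n → ℝ := fun i => r i
  have hMx : (matSec M n).mulVec xv = rv := funext fun i => by
    rw [show rv i = r i from rfl, ← h i i.isLt, secMul,
      ← Fin.sum_univ_eq_sum_range (fun j => M i j * x j)]
    rfl
  have hBr : Matrix.toEuclideanCLM (𝕜 := ℝ) B (WithLp.toLp 2 rv) = WithLp.toLp 2 xv := by
    rw [Matrix.toEuclideanCLM_toLp, ← hMx, Matrix.mulVec_mulVec, hB, Matrix.one_mulVec]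
  have hnorm : ∀ v : ℕ → ℝ, ‖WithLp.toLp 2 (fun i : Fin n => v i)‖ ^ 2 = ∑ i ∈ range n, v i ^ 2 :=
    fun v => by rw [EuclideanSpace.real_norm_sq_eq, Fin.sum_univ_eq_sum_range (fun i => v i ^ 2)]
  rw [← hnorm x, ← hnorm r, ← mul_pow]
  refine pow_le_pow_left₀ (norm_nonneg _) ?_ 2
  exact hBr ▸ ContinuousLinearMap.le_opNorm _ _

lemma sum_range_sum_Ico_eq {β : Type*} [AddCommMonoid β] {N : ℕ → ℕ} (hN : Monotone N)
    (g : ℕ → β) (ℓ p : ℕ) :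
    ∑ k ∈ range p, ∑ t ∈ Ico (N (ℓ + k)) (N (ℓ + k + 1)), g t =
      ∑ t ∈ Ico (N ℓ) (N (ℓ + p)), g t := by
  induction p with
  | zero => simp
  | succ p ih =>
    rw [sum_range_succ, ih, ← add_assoc]
    exact sum_Ico_consecutive g (hN (Nat.le_add_right ℓ p)) (hN (Nat.le_succ _))

section BlockLU

variable {N : ℕ → ℕ} {M L U Uinv : ℕ → ℕ → ℝ} {c : ℕ → ℕ → ℝ}
  {TU TUinv : lp (fun _ : ℕ => ℝ) 2 →L[ℝ] lp (fun _ : ℕ => ℝ) 2}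

lemma BlockLowerUnit.apply_self (hL : BlockLowerUnit N L) (i : ℕ) :
    L i i = 1 := by
  simpa using hL.2 i i fun _ => Iff.rfl

lemma BlockLowerUnit.apply_eq_zero_of_lt (hL : BlockLowerUnit N L) {i k : ℕ}
    (hik : i < k) : L i k = 0 := by
  by_cases hs : sameBlk N i k
  · simpa [hik.ne] using hL.2 i k hs
  · obtain ⟨ℓ, hℓ⟩ := not_forall.mp hs
    exact hL.1 i k ⟨ℓ, by omega⟩

-- Forward substitution: `L` is unit lower triangular by `BlockLowerUnit.apply_eq_zero_of_lt`.
lemma BlockLowerUnit.secMul_eq_zero (hL : BlockLowerUnit N L)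
    (hLU : ∀ i j, M i j = ∑' k, L i k * U k j) {x : ℕ → ℝ} {n K : ℕ}
    (hM : ∀ i < K, secMul M n x i = 0) : ∀ k < K, secMul U n x k = 0 := by
  have hrow : ∀ i, secMul M n x i = ∑ k ∈ range (i + 1), L i k * secMul U n x k := by
    intro i
    have hM' : ∀ j, M i j = ∑ k ∈ range (i + 1), L i k * U k j := fun j => by
      rw [hLU]
      exact tsum_eq_sum fun k hk => by
        rw [hL.apply_eq_zero_of_lt (by simpa using hk), zero_mul]
    simp only [secMul, hM', sum_mul, mul_sum, mul_assoc]
    exact sum_comm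
  intro k
  induction k using Nat.strong_induction_on with
  | _ k ih =>
    intro hk
    have h := hM k hk
    rwa [hrow, sum_range_succ, sum_eq_zero fun t ht => by
      rw [ih t (mem_range.1 ht) (by simp at ht; omega), mul_zero], hL.apply_self, zero_add,
      one_mul] at h

lemma BlockUpper.secMul_eq_zero (hU : BlockUpper N U) {m k : ℕ}
    (hk : N m ≤ k) (x : ℕ → ℝ) : secMul U (N m) x k = 0 :=
  sum_eq_zero fun j hj => by rw [hU k j ⟨m, mem_range.1 hj, hk⟩, zero_mul]

lemma BlockUpper.secMul_secMul_eq_of_left_inverse (hU : BlockUpper N U)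
    (hUinvU : ∀ i j, ∑' k, Uinv i k * U k j = if i = j then 1 else 0) {m : ℕ} {x : ℕ → ℝ}
    (hx : ∀ j, N m ≤ j → x j = 0) (i : ℕ) :
    secMul Uinv (N m) (secMul U (N m) x) i = x i := by
  have hinv : ∀ j < N m, ∑ k ∈ range (N m), Uinv i k * U k j = if i = j then 1 else 0 :=
    fun j hj => by
      rw [← hUinvU]
      exact (tsum_eq_sum fun k hk => by
        rw [hU k j ⟨m, hj, by simpa using hk⟩, mul_zero]).symm
  calc secMul Uinv (N m) (secMul U (N m) x) i
      = ∑ j ∈ range (N m), (∑ k ∈ range (N m), Uinv i k * U k j) * x j := by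
        simp only [secMul, mul_sum, sum_mul, mul_assoc]
        exact sum_comm
    _ = ∑ j ∈ range (N m), if i = j then x j else 0 :=
        sum_congr rfl fun j hj => by rw [hinv j (mem_range.1 hj), ite_mul, one_mul, zero_mul]
    _ = x i := by
        rw [sum_ite_eq]
        split_ifs with hi
        · rfl
        · exact (hx i (by simpa using hi)).symm

lemma exists_secMul_eq_trunc (hN : StrictMono N) (hL : BlockLowerUnit N L) (hU : BlockUpper N U)
    (hLU : ∀ i j, M i j = ∑' k, L i k * U k j) (hc : ∀ m j, N m ≤ j → c m j = 0)
    (hGal : ∀ ℓ m, ℓ ≤ m → ∀ i < N ℓ, secMul M (N m) (c m - c ℓ) i = 0) :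
    ∃ y : ℕ → ℝ, ∀ m k, secMul U (N m) (c m) k = if k < N m then y k else 0 := by
  have hagree : ∀ ℓ m, ℓ ≤ m → ∀ k < N ℓ,
      secMul U (N m) (c m) k = secMul U (N ℓ) (c ℓ) k := by
    intro ℓ m hlm k hk
    have h := hL.secMul_eq_zero hLU (hGal ℓ m hlm) k hk
    rwa [secMul_sub, secMul_eq_of_le U (hN.monotone hlm) (hc ℓ), sub_eq_zero] at h
  refine ⟨fun t => secMul U (N (t + 1)) (c (t + 1)) t, fun m k => ?_⟩
  split_ifs with hk
  · have hkN : k < N (k + 1) := (Nat.lt_succ_self k).trans_le hN.le_apply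
    rcases le_total m (k + 1) with h | h
    · exact (hagree m (k + 1) h k hk).symm
    · exact hagree (k + 1) m h k hkN
  · exact hU.secMul_eq_zero (not_lt.1 hk) _

lemma sum_sq_coeff_sub_le_and_ge (hN : Monotone N) (hU : BlockUpper N U)
    (hUinvU : ∀ i j, ∑' k, Uinv i k * U k j = if i = j then 1 else 0)
    (hTU : lpRepr U TU) (hTUinv : lpRepr Uinv TUinv) (hc : ∀ m j, N m ≤ j → c m j = 0)
    {y : ℕ → ℝ} (hy : ∀ m k, secMul U (N m) (c m) k = if k < N m then y k else 0)
    {ℓ m : ℕ} (hlm : ℓ ≤ m) :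
    ∑ j ∈ range (N m), (c m - c ℓ) j ^ 2 ≤ ‖TUinv‖ ^ 2 * ∑ t ∈ Ico (N ℓ) (N m), y t ^ 2 ∧
      ∑ t ∈ Ico (N ℓ) (N m), y t ^ 2 ≤ ‖TU‖ ^ 2 * ∑ j ∈ range (N m), (c m - c ℓ) j ^ 2 := by
  set Δ := secMul U (N m) (c m - c ℓ) with hΔdef
  have hdiff_supp : ∀ j, N m ≤ j → (c m - c ℓ) j = 0 := fun j hj => by
    rw [Pi.sub_apply, hc m j hj, hc ℓ j ((hN hlm).trans hj), sub_zero]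
  have hΔ : ∑ k ∈ range (N m), Δ k ^ 2 = ∑ t ∈ Ico (N ℓ) (N m), y t ^ 2 := by
    have hΔy : ∀ k < N m, Δ k = if k < N ℓ then 0 else y k := fun k hk => by
      rw [hΔdef, secMul_sub, secMul_eq_of_le U (hN hlm) (hc ℓ), hy, hy, if_pos hk]
      split_ifs <;> ring
    rw [← sum_range_add_sum_Ico _ (hN hlm), sum_eq_zero fun k hk => by
      rw [hΔy k ((mem_range.1 hk).trans_le (hN hlm)), if_pos (mem_range.1 hk)]; ring, zero_add]
    exact sum_congr rfl fun k hk => by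
      rw [hΔy k (mem_Ico.1 hk).2, if_neg (not_lt.2 (mem_Ico.1 hk).1)]
  have hinv : ∀ j, (c m - c ℓ) j = secMul Uinv (N m) Δ j :=
    fun j => (hU.secMul_secMul_eq_of_left_inverse hUinvU hdiff_supp j).symm
  constructor
  · simp only [hinv, ← hΔ]
    exact hTUinv.sum_sq_secMul_le Δ (N m) (N m)
  · rw [← hΔ]
    exact hTU.sum_sq_secMul_le _ (N m) (N m)

theorem sum_sum_sq_coeff_succ_sub_le (hN : StrictMono N) (hL : BlockLowerUnit N L)
    (hU : BlockUpper N U) (hLU : ∀ i j, M i j = ∑' k, L i k * U k j)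
    (hUinvU : ∀ i j, ∑' k, Uinv i k * U k j = if i = j then 1 else 0)
    (hTU : lpRepr U TU) (hTUinv : lpRepr Uinv TUinv) (hc : ∀ m j, N m ≤ j → c m j = 0)
    (hGal : ∀ ℓ m, ℓ ≤ m → ∀ i < N ℓ, secMul M (N m) (c m - c ℓ) i = 0) (ℓ p : ℕ) :
    ∑ k ∈ range p, ∑ j ∈ range (N (ℓ + k + 1)), (c (ℓ + k + 1) - c (ℓ + k)) j ^ 2 ≤
      ‖TUinv‖ ^ 2 * ‖TU‖ ^ 2 * ∑ j ∈ range (N (ℓ + p)), (c (ℓ + p) - c ℓ) j ^ 2 := by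
  obtain ⟨y, hy⟩ := exists_secMul_eq_trunc hN hL hU hLU hc hGal
  have hcomp := fun {k m : ℕ} (hkm : k ≤ m) =>
    sum_sq_coeff_sub_le_and_ge hN.monotone hU hUinvU hTU hTUinv hc hy hkm
  calc ∑ k ∈ range p, ∑ j ∈ range (N (ℓ + k + 1)), (c (ℓ + k + 1) - c (ℓ + k)) j ^ 2
      ≤ ∑ k ∈ range p, ‖TUinv‖ ^ 2 * ∑ t ∈ Ico (N (ℓ + k)) (N (ℓ + k + 1)), y t ^ 2 :=
        sum_le_sum fun k _ => (hcomp (Nat.le_succ _)).1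
    _ = ‖TUinv‖ ^ 2 * ∑ t ∈ Ico (N ℓ) (N (ℓ + p)), y t ^ 2 := by
        rw [← mul_sum, sum_range_sum_Ico_eq hN.monotone]
    _ ≤ ‖TUinv‖ ^ 2 * ‖TU‖ ^ 2 * ∑ j ∈ range (N (ℓ + p)), (c (ℓ + p) - c ℓ) j ^ 2 := by
        rw [mul_assoc]
        gcongr
        exact (hcomp (Nat.le_add_right ℓ p)).2

end BlockLU

section Expansion

variable {X : Type*} [NormedAddCommGroup X] [Module ℝ X] {w : ℕ → X} {C : ℝ}

def RieszLowerBound (w : ℕ → X) (C : ℝ) : Prop :=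
  ∀ (lam : ℕ → ℝ) (x : X), Summable (fun n => lam n ^ 2) →
    HasSum (fun n => lam n • w n) x → C⁻¹ * ‖x‖ ^ 2 ≤ ∑' n, lam n ^ 2

lemma norm_sq_sum_smul_le (hC : 0 < C) (hRiesz : RieszLowerBound w C) (lam : ℕ → ℝ) (n : ℕ) :
    ‖∑ j ∈ range n, lam j • w j‖ ^ 2 ≤ C * ∑ j ∈ range n, lam j ^ 2 := by
  classical
  set lam' : ℕ → ℝ := fun j => if j ∈ range n then lam j else 0
  have hout : ∀ j ∉ range n, lam' j = 0 := fun j hj => if_neg hj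
  have hsum : ∑ j ∈ range n, lam' j • w j = ∑ j ∈ range n, lam j • w j :=
    sum_congr rfl fun j hj => by rw [show lam' j = lam j from if_pos hj]
  have hsq : ∑' j, lam' j ^ 2 = ∑ j ∈ range n, lam j ^ 2 := by
    rw [tsum_eq_sum fun j hj => by rw [hout j hj, sq, zero_mul]]
    exact sum_congr rfl fun j hj => by rw [show lam' j = lam j from if_pos hj]
  have h := hRiesz lam' _
    (summable_of_ne_finset_zero fun j hj => by rw [hout j hj, sq, zero_mul])
    (hasSum_sum_of_ne_finset_zero fun j hj => by rw [hout j hj, zero_smul])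
  rwa [hsum, hsq, inv_mul_le_iff₀ hC] at h

lemma sum_sq_apply_le (hC : 0 < C) (hRiesz : RieszLowerBound w C)
    {a : X →ₗ[ℝ] X →ₗ[ℝ] ℝ} {Ca : ℝ} (ha : ∀ x y : X, |a x y| ≤ Ca * ‖x‖ * ‖y‖) (e : X) (n : ℕ) :
    ∑ i ∈ range n, a e (w i) ^ 2 ≤ C * Ca ^ 2 * ‖e‖ ^ 2 := by
  set S := ∑ i ∈ range n, a e (w i) ^ 2
  set v := ∑ i ∈ range n, a e (w i) • w i
  have hS : 0 ≤ S := sum_nonneg fun i _ => sq_nonneg _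
  have hav : a e v = S := by simp only [v, S, map_sum, map_smul, smul_eq_mul, sq]
  have hv : ‖v‖ ^ 2 ≤ C * S := norm_sq_sum_smul_le hC hRiesz _ n
  have hSv : S ≤ Ca * ‖e‖ * ‖v‖ := hav ▸ (le_abs_self _).trans (ha e v)
  have hS2 : S ^ 2 ≤ Ca ^ 2 * ‖e‖ ^ 2 * (C * S) := calc
    S ^ 2 ≤ (Ca * ‖e‖ * ‖v‖) ^ 2 := pow_le_pow_left₀ hS hSv 2
    _ = Ca ^ 2 * ‖e‖ ^ 2 * ‖v‖ ^ 2 := by ring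
    _ ≤ Ca ^ 2 * ‖e‖ ^ 2 * (C * S) := by gcongr
  nlinarith [mul_nonneg (mul_nonneg hC.le (sq_nonneg Ca)) (sq_nonneg ‖e‖)]

lemma exists_coeff_of_mem_span {x : X} {K : ℕ} (hx : x ∈ Submodule.span ℝ (w '' {n | n < K})) :
    ∃ c : ℕ → ℝ, (∀ j, K ≤ j → c j = 0) ∧ ∀ n, K ≤ n → ∑ j ∈ range n, c j • w j = x := by
  rw [show {n : ℕ | n < K} = ↑(range K) by ext; simp,
    Submodule.mem_span_image_finset_iff_exists_fun'] at hx
  obtain ⟨c, hc⟩ := hx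
  refine ⟨fun j => if j < K then c j else 0, fun j hj => if_neg (not_lt.2 hj), fun n hn => ?_⟩
  have htail : ∑ j ∈ Ico K n, (if j < K then c j else 0) • w j = 0 :=
    sum_eq_zero fun j hj => by rw [if_neg (not_lt.2 (mem_Ico.1 hj).1), zero_smul]
  rw [← hc, ← sum_range_add_sum_Ico _ hn, htail, add_zero]
  exact sum_congr rfl fun j hj => by simp only [if_pos (mem_range.1 hj)]

lemma secMul_eq_apply_sum {a : X →ₗ[ℝ] X →ₗ[ℝ] ℝ} {M : ℕ → ℕ → ℝ}
    (hMdef : ∀ i j, M i j = a (w j) (w i)) (n : ℕ) (x : ℕ → ℝ) (i : ℕ) :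
    secMul M n x i = a (∑ j ∈ range n, x j • w j) (w i) := by
  simp only [secMul, hMdef, map_sum, map_smul, LinearMap.sum_apply, LinearMap.smul_apply,
    smul_eq_mul, mul_comm]

-- Discrete stability: the uniform bound on the inverse sections plays the role of inf-sup.
lemma sum_sq_le_of_apply_basis_eq (hC : 0 < C) (hRiesz : RieszLowerBound w C)
    {a : X →ₗ[ℝ] X →ₗ[ℝ] ℝ} {Ca : ℝ} (ha : ∀ x y : X, |a x y| ≤ Ca * ‖x‖ * ‖y‖)
    {M : ℕ → ℕ → ℝ} (hMdef : ∀ i j, M i j = a (w j) (w i)) {n : ℕ}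
    {B : Matrix (Fin n) (Fin n) ℝ} (hB : B * matSec M n = 1) {K : ℝ}
    (hBK : ‖Matrix.toEuclideanCLM (𝕜 := ℝ) B‖ ≤ K) {d : ℕ → ℝ} {e : X}
    (h : ∀ i < n, a (∑ j ∈ range n, d j • w j) (w i) = a e (w i)) :
    ∑ j ∈ range n, d j ^ 2 ≤ K ^ 2 * (C * Ca ^ 2 * ‖e‖ ^ 2) :=
  (sum_sq_le_of_secMul_eq hB fun i hi => (secMul_eq_apply_sum hMdef n d i).trans (h i hi)).trans <|
    mul_le_mul (pow_le_pow_left₀ (norm_nonneg _) hBK 2) (sum_sq_apply_le hC hRiesz ha e n)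
      (sum_nonneg fun _ _ => sq_nonneg _) (sq_nonneg _)

end Expansion

theorem statement11_general
    {X : Type*} [NormedAddCommGroup X] [InnerProductSpace ℝ X] [CompleteSpace X]
    (w : ℕ → X) (C : ℝ) (hC : 0 < C)
    (hRiesz : ∀ (lam : ℕ → ℝ) (x : X), Summable (fun n => lam n ^ 2) →
      HasSum (fun n => lam n • w n) x →
        C⁻¹ * ‖x‖ ^ 2 ≤ (∑' n : ℕ, lam n ^ 2) ∧ (∑' n : ℕ, lam n ^ 2) ≤ C * ‖x‖ ^ 2)
    (a : X →ₗ[ℝ] X →ₗ[ℝ] ℝ) (Ca : ℝ)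
    (ha : ∀ x y : X, |a x y| ≤ Ca * ‖x‖ * ‖y‖)
    (M : ℕ → ℕ → ℝ) (hMdef : ∀ i j : ℕ, M i j = a (w j) (w i))
    (N : ℕ → ℕ) (hNmono : StrictMono N)
    (Xsp : ℕ → Submodule ℝ X)
    (hXsp : ∀ ℓ : ℕ, Xsp ℓ = Submodule.span ℝ (w '' {n : ℕ | n < N ℓ}))
    (Cinfsup : ℝ)
    (Minv : ∀ ℓ : ℕ, Matrix (Fin (N ℓ)) (Fin (N ℓ)) ℝ)
    (hMinv : ∀ ℓ : ℕ, matSec M (N ℓ) * Minv ℓ = 1 ∧ Minv ℓ * matSec M (N ℓ) = 1)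
    (hMinvBound : ∀ ℓ : ℕ, ‖Matrix.toEuclideanCLM (𝕜 := ℝ) (Minv ℓ)‖ ≤ Cinfsup)
    (L U Uinv : ℕ → ℕ → ℝ)
    (hL : BlockLowerUnit N L) (hU : BlockUpper N U)
    (hLU : ∀ i j : ℕ, M i j = ∑' k : ℕ, L i k * U k j)
    (hUinvU : ∀ i j : ℕ, (∑' k : ℕ, Uinv i k * U k j) = if i = j then 1 else 0)
    (TU TUinv : lp (fun _ : ℕ => ℝ) 2 →L[ℝ] lp (fun _ : ℕ => ℝ) 2)
    (hTU : lpRepr U TU) (hTUinv : lpRepr Uinv TUinv)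
    (f : X →L[ℝ] ℝ)
    (u : X) (hu : ∀ v : X, a u v = f v)
    (usol : ℕ → X)
    (husolmem : ∀ ℓ : ℕ, usol ℓ ∈ Xsp ℓ)
    (husol : ∀ ℓ : ℕ, ∀ v ∈ Xsp ℓ, a (usol ℓ) v = f v) :
    ∃ Cqo : ℝ, 0 < Cqo ∧ ∀ ℓ : ℕ,
      (∑' k : ℕ, ‖usol (ℓ + k + 1) - usol (ℓ + k)‖ ^ 2) ≤ Cqo * ‖u - usol ℓ‖ ^ 2 := by
  have hRieszLow : RieszLowerBound w C := fun lam x h₁ h₂ => (hRiesz lam x h₁ h₂).1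
  choose c hc0 hcsum using fun m => exists_coeff_of_mem_span (hXsp m ▸ husolmem m)
  have hdiff : ∀ ℓ m, ℓ ≤ m → ∑ j ∈ range (N m), (c m - c ℓ) j • w j = usol m - usol ℓ := by
    intro ℓ m hlm
    simp only [Pi.sub_apply, sub_smul, sum_sub_distrib, hcsum m _ le_rfl,
      hcsum ℓ _ (hNmono.monotone hlm)]
  have hw : ∀ m i, i < N m → w i ∈ Xsp m := fun m i hi =>
    hXsp m ▸ Submodule.subset_span ⟨i, hi, rfl⟩
  have hres : ∀ ℓ m, ℓ ≤ m → ∀ i < N m, a (usol m - usol ℓ) (w i) = a (u - usol ℓ) (w i) := by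
    intro ℓ m hlm i hi
    rw [map_sub, map_sub, LinearMap.sub_apply, LinearMap.sub_apply, husol m _ (hw m i hi), hu]
  have horth : ∀ ℓ m, ℓ ≤ m → ∀ i < N ℓ, secMul M (N m) (c m - c ℓ) i = 0 := by
    intro ℓ m hlm i hi
    rw [secMul_eq_apply_sum hMdef, hdiff ℓ m hlm,
      hres ℓ m hlm i (hi.trans_le (hNmono.monotone hlm)), map_sub, LinearMap.sub_apply, hu, husol ℓ _ (hw ℓ i hi), sub_self]
  have hstab : ∀ ℓ m, ℓ ≤ m → ∑ j ∈ range (N m), (c m - c ℓ) j ^ 2 ≤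
      Cinfsup ^ 2 * (C * Ca ^ 2 * ‖u - usol ℓ‖ ^ 2) := fun ℓ m hlm =>
    sum_sq_le_of_apply_basis_eq hC hRieszLow ha hMdef (hMinv m).2 (hMinvBound m) fun i hi =>
      hdiff ℓ m hlm ▸ hres ℓ m hlm i hi
  have hinc : ∀ k, ‖usol (k + 1) - usol k‖ ^ 2 ≤
      C * ∑ j ∈ range (N (k + 1)), (c (k + 1) - c k) j ^ 2 := fun k =>
    hdiff k (k + 1) k.le_succ ▸ norm_sq_sum_smul_le hC hRieszLow _ _
  set B := C ^ 2 * ‖TUinv‖ ^ 2 * ‖TU‖ ^ 2 * Cinfsup ^ 2 * Ca ^ 2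
  refine ⟨B + 1, by positivity, fun ℓ =>
    Real.tsum_le_of_sum_range_le (fun _ => sq_nonneg _) fun p => ?_⟩
  calc ∑ k ∈ range p, ‖usol (ℓ + k + 1) - usol (ℓ + k)‖ ^ 2
      ≤ C * ∑ k ∈ range p, ∑ j ∈ range (N (ℓ + k + 1)), (c (ℓ + k + 1) - c (ℓ + k)) j ^ 2 := by
        rw [mul_sum]
        exact sum_le_sum fun k _ => hinc (ℓ + k)
    _ ≤ C * (‖TUinv‖ ^ 2 * ‖TU‖ ^ 2 * ∑ j ∈ range (N (ℓ + p)), (c (ℓ + p) - c ℓ) j ^ 2) := by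
        gcongr
        exact sum_sum_sq_coeff_succ_sub_le hNmono hL hU hLU hUinvU hTU hTUinv hc0 horth ℓ p
    _ ≤ C * (‖TUinv‖ ^ 2 * ‖TU‖ ^ 2 * (Cinfsup ^ 2 * (C * Ca ^ 2 * ‖u - usol ℓ‖ ^ 2))) := by
        gcongr
        exact hstab ℓ (ℓ + p) (Nat.le_add_right ℓ p)
    _ = B * ‖u - usol ℓ‖ ^ 2 := by ring
    _ ≤ (B + 1) * ‖u - usol ℓ‖ ^ 2 := by gcongr; linarith

/-- General quasi-orthogonality from a bounded block-LU factorization of the stiffness matrix: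
if `(w_n)` is a Riesz basis, `M_{ij} = a(w_j, w_i)` admits a block-LU factorization `M = LU`
with `U, U⁻¹` bounded on `ℓ²`, and `u`, `u_ℓ` are the exact and Galerkin solutions, then
`∑_{k≥ℓ} ‖u_{k+1} − u_k‖² ≤ C_qo ‖u − u_ℓ‖²` for all `ℓ`. -/
theorem statement11
    {X : Type*} [NormedAddCommGroup X] [InnerProductSpace ℝ X] [CompleteSpace X]
    (w : ℕ → X) (C : ℝ) (hC : 0 < C)
    (hRiesz : ∀ (lam : ℕ → ℝ) (x : X), Summable (fun n => lam n ^ 2) →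
      HasSum (fun n => lam n • w n) x →
        C⁻¹ * ‖x‖ ^ 2 ≤ (∑' n : ℕ, lam n ^ 2) ∧ (∑' n : ℕ, lam n ^ 2) ≤ C * ‖x‖ ^ 2)
    (a : X →ₗ[ℝ] X →ₗ[ℝ] ℝ) (Ca : ℝ)
    (ha : ∀ x y : X, |a x y| ≤ Ca * ‖x‖ * ‖y‖)
    (M : ℕ → ℕ → ℝ) (hMdef : ∀ i j : ℕ, M i j = a (w j) (w i))
    (N : ℕ → ℕ) (hNmono : StrictMono N)
    (Xsp : ℕ → Submodule ℝ X)
    (hXsp : ∀ ℓ : ℕ, Xsp ℓ = Submodule.span ℝ (w '' {n : ℕ | n < N ℓ}))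
    (Cinfsup : ℝ)
    (Minv : ∀ ℓ : ℕ, Matrix (Fin (N ℓ)) (Fin (N ℓ)) ℝ)
    (hMinv : ∀ ℓ : ℕ, matSec M (N ℓ) * Minv ℓ = 1 ∧ Minv ℓ * matSec M (N ℓ) = 1)
    (hMinvBound : ∀ ℓ : ℕ, ‖Matrix.toEuclideanCLM (𝕜 := ℝ) (Minv ℓ)‖ ≤ Cinfsup)
    (L U Uinv : ℕ → ℕ → ℝ)
    (hL : BlockLowerUnit N L) (hU : BlockUpper N U) (hUinvUp : BlockUpper N Uinv)
    (hLU : ∀ i j : ℕ, M i j = ∑' k : ℕ, L i k * U k j)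
    (hUUinv : ∀ i j : ℕ, (∑' k : ℕ, U i k * Uinv k j) = if i = j then 1 else 0)
    (hUinvU : ∀ i j : ℕ, (∑' k : ℕ, Uinv i k * U k j) = if i = j then 1 else 0)
    (TU TUinv : lp (fun _ : ℕ => ℝ) 2 →L[ℝ] lp (fun _ : ℕ => ℝ) 2)
    (hTU : lpRepr U TU) (hTUinv : lpRepr Uinv TUinv)
    (f : X →L[ℝ] ℝ)
    (u : X) (hu : ∀ v : X, a u v = f v)
    (usol : ℕ → X)
    (husolmem : ∀ ℓ : ℕ, usol ℓ ∈ Xsp ℓ)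
    (husol : ∀ ℓ : ℕ, ∀ v ∈ Xsp ℓ, a (usol ℓ) v = f v) :
    ∃ Cqo : ℝ, 0 < Cqo ∧ ∀ ℓ : ℕ,
      (∑' k : ℕ, ‖usol (ℓ + k + 1) - usol (ℓ + k)‖ ^ 2) ≤ Cqo * ‖u - usol ℓ‖ ^ 2 :=
  statement11_general w C hC hRiesz a Ca ha M hMdef N hNmono Xsp hXsp Cinfsup Minv hMinv hMinvBound
    L U Uinv hL hU hLU hUinvU TU TUinv hTU hTUinv f u hu usol husolmem husol
end
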